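/- Each of the four small-step relations ⇀ (apply), →read, →store, and →merge is deterministic on well-formed configurations: if (C1, h1, e1) and (C2, h2, e2) are both obtained from a well-formed configuration (C, h, e) by a step of the same relation, then (C1, h1, e1) = (C2, h2, e2). -/

import Mathlib

namespace Memo

/-! ### Terms over a program signature -/

/-- Terms over operation symbols `Op`, constructors `Con` and variables `V`. -/
inductive Tm (Op Con V : Type) : Type
  | var : V → Tm Op Con V
  | op  : Op → List (Tm Op Con V) → Tm Op Con V
  | con : Con → List (Tm Op Con V) → Tm Op Con V

namespace Tm
variable {Op Con V : Type}

/-- Substitution. -/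
def subst (σ : V → Tm Op Con V) : Tm Op Con V → Tm Op Con V
  | .var x => σ x
  | .op f ts => .op f (ts.attach.map fun t => subst σ t.1)
  | .con c ts => .con c (ts.attach.map fun t => subst σ t.1)
decreasing_by
  all_goals simp_wf
  all_goals (have := List.sizeOf_lt_of_mem t.2; omega)

/-- The size `|t|` of a term (number of symbols). -/
def size : Tm Op Con V → ℕ
  | .var _ => 1
  | .op _ ts => 1 + (ts.attach.map fun t => size t.1).sum
  | .con _ ts => 1 + (ts.attach.map fun t => size t.1).sum
decreasing_by
  all_goals simp_wf
  all_goals (have := List.sizeOf_lt_of_mem t.2; omega)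

/-- Number of occurrences of the variable `x` in a term. -/
def varCount [DecidableEq V] (x : V) : Tm Op Con V → ℕ
  | .var y => if y = x then 1 else 0
  | .op _ ts => (ts.attach.map fun t => varCount x t.1).sum
  | .con _ ts => (ts.attach.map fun t => varCount x t.1).sum
decreasing_by
  all_goals simp_wf
  all_goals (have := List.sizeOf_lt_of_mem t.2; omega)

end Tm

/-- Values: ground constructor terms. -/
inductive IsValue {Op Con V : Type} : Tm Op Con V → Prop
  | con {c : Con} {ts} : (∀ t ∈ ts, IsValue t) → IsValue (.con c ts)

/-- Ground terms: terms without variables. -/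
inductive Ground {Op Con V : Type} : Tm Op Con V → Prop
  | op {f : Op} {ts} : (∀ t ∈ ts, Ground t) → Ground (.op f ts)
  | con {c : Con} {ts} : (∀ t ∈ ts, Ground t) → Ground (.con c ts)

/-- Patterns: terms built from constructors and variables only. -/
inductive IsPattern {Op Con V : Type} : Tm Op Con V → Prop
  | var (x : V) : IsPattern (.var x)
  | con {c : Con} {ts} : (∀ t ∈ ts, IsPattern t) → IsPattern (.con c ts)

/-- The variable `x` occurs in the given term. -/
inductive VarIn {Op Con V : Type} (x : V) : Tm Op Con V → Prop
  | var : VarIn x (.var x)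
  | op {f : Op} {ts t} : t ∈ ts → VarIn x t → VarIn x (.op f ts)
  | con {c : Con} {ts t} : t ∈ ts → VarIn x t → VarIn x (.con c ts)

/-! ### Programs -/

/-- A rewrite rule `f(p₁,…,pₖ) → r`. -/
structure Rule (Op Con V : Type) where
  lhsOp : Op
  lhsArgs : List (Tm Op Con V)
  rhs : Tm Op Con V

/-- A program: a finite set (list) of rewrite rules. -/
structure Prog (Op Con V : Type) where
  rules : List (Rule Op Con V)

/-- Well-formed rule: left-hand side arguments are patterns and all variables of the
right-hand side occur in the left-hand side. -/
def WFRule {Op Con V : Type} (r : Rule Op Con V) : Prop :=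
  (∀ p ∈ r.lhsArgs, IsPattern p) ∧
  (∀ x, VarIn x r.rhs → ∃ p ∈ r.lhsArgs, VarIn x p)

/-- Left-linearity: every variable occurs at most once in the left-hand side. -/
def LeftLinear {Op Con V : Type} [DecidableEq V] (r : Rule Op Con V) : Prop :=
  ∀ x : V, (r.lhsArgs.map (Tm.varCount x)).sum ≤ 1

/-- Non-ambiguity: no two rules have overlapping left-hand sides. -/
def NonAmbiguous {Op Con V : Type} (P : Prog Op Con V) : Prop :=
  ∀ r1 ∈ P.rules, ∀ r2 ∈ P.rules, r1.lhsOp = r2.lhsOp →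
    ∀ σ1 σ2 : V → Tm Op Con V,
      r1.lhsArgs.map (Tm.subst σ1) = r2.lhsArgs.map (Tm.subst σ2) → r1 = r2

/-- Orthogonal program: well-formed, left-linear and non-ambiguous. -/
def Orthogonal {Op Con V : Type} [DecidableEq V] (P : Prog Op Con V) : Prop :=
  (∀ r ∈ P.rules, WFRule r ∧ LeftLinear r) ∧ NonAmbiguous P

/-! ### Standard call-by-value big-step semantics (Figure 3) -/

mutual
/-- `Eval P t v`: the term `t` reduces to the value `v`. -/
inductive Eval {Op Con V : Type} (P : Prog Op Con V) : Tm Op Con V → Tm Op Con V → Prop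
  | con {c : Con} {ts vs} : EvalList P ts vs → Eval P (.con c ts) (.con c vs)
  | split {f : Op} {ts vs v} : EvalList P ts vs → Eval P (.op f vs) v →
      Eval P (.op f ts) v
  | apply {f : Op} {vs r σ v} : (∀ u ∈ vs, IsValue u) → r ∈ P.rules → r.lhsOp = f →
      vs = r.lhsArgs.map (Tm.subst σ) → Eval P (Tm.subst σ r.rhs) v →
      Eval P (.op f vs) v

/-- Left-to-right evaluation of a list of terms. -/
inductive EvalList {Op Con V : Type} (P : Prog Op Con V) :
    List (Tm Op Con V) → List (Tm Op Con V) → Prop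
  | nil : EvalList P [] []
  | cons {t v ts vs} : Eval P t v → EvalList P ts vs → EvalList P (t :: ts) (v :: vs)
end

/-! ### Cost-annotated big-step semantics with memoization (Figure 4) -/

/-- A cache: a set of pairs of a function call on values and its result value. -/
abbrev TCache (Op Con V : Type) := Set (Op × List (Tm Op Con V) × Tm Op Con V)

mutual
/-- `MEval P C₀ t m C₁ v`: starting with cache `C₀` the term `t` reduces to the value `v`
with updated cache `C₁` at cost `m` (number of non-tabulated function applications). -/
inductive MEval {Op Con V : Type} (P : Prog Op Con V) :
    TCache Op Con V → Tm Op Con V → ℕ → TCache Op Con V → Tm Op Con V → Prop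
  | con {C0 C1 : TCache Op Con V} {c : Con} {ts m vs} :
      MEvalList P C0 ts m C1 vs →
      MEval P C0 (.con c ts) m C1 (.con c vs)
  | split {C0 C1 C2 : TCache Op Con V} {f : Op} {ts m vs n v} :
      MEvalList P C0 ts m C1 vs →
      MEval P C1 (.op f vs) n C2 v →
      MEval P C0 (.op f ts) (n + m) C2 v
  | read {C : TCache Op Con V} {f : Op} {vs v} :
      (∀ u ∈ vs, IsValue u) → (f, vs, v) ∈ C →
      MEval P C (.op f vs) 0 C v
  | update {C C' : TCache Op Con V} {f : Op} {vs r σ m v} :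
      (∀ u ∈ vs, IsValue u) → (∀ u, (f, vs, u) ∉ C) →
      r ∈ P.rules → r.lhsOp = f → vs = r.lhsArgs.map (Tm.subst σ) →
      MEval P C (Tm.subst σ r.rhs) m C' v →
      MEval P C (.op f vs) (m + 1) (insert (f, vs, v) C') v

/-- Left-to-right evaluation of a list of terms, threading the cache and summing costs. -/
inductive MEvalList {Op Con V : Type} (P : Prog Op Con V) :
    TCache Op Con V → List (Tm Op Con V) → ℕ → TCache Op Con V → List (Tm Op Con V) → Prop
  | nil {C : TCache Op Con V} : MEvalList P C [] 0 C []
  | cons {C0 C1 C2 : TCache Op Con V} {t m v ts n vs} :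
      MEval P C0 t m C1 v → MEvalList P C1 ts n C2 vs →
      MEvalList P C0 (t :: ts) (m + n) C2 (v :: vs)
end

/-! ### Heaps -/

/-- Locations. -/
abbrev Loc := ℕ

/-- A heap: a (partial) map from locations to constructors applied to locations,
i.e. a term graph over the constructors whose nodes are locations. -/
abbrev Heap (Con : Type) := Loc → Option (Con × List Loc)

/-- Domain (set of nodes) of a heap. -/
def heapDom {Con : Type} (h : Heap Con) : Set Loc := {l | h l ≠ none}

/-- A heap is maximally shared if equally labeled locations coincide. -/
def MaxShared {Con : Type} (h : Heap Con) : Prop :=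
  ∀ l1 l2 c ls, h l1 = some (c, ls) → h l2 = some (c, ls) → l1 = l2

/-- All successors of heap nodes are again heap nodes. -/
def HeapClosed {Con : Type} (h : Heap Con) : Prop :=
  ∀ l c ls, h l = some (c, ls) → ∀ l' ∈ ls, l' ∈ heapDom h

/-- `HUnfolds h l v`: the value `v` is stored at location `l`, i.e. `v = [l]_h` is
obtained by unfolding the heap `h` starting from location `l`. -/
inductive HUnfolds {Op Con V : Type} (h : Heap Con) : Loc → Tm Op Con V → Prop
  | mk {l : Loc} {c ls ts} : h l = some (c, ls) → ls.length = ts.length →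
      (∀ (i : ℕ) l' t, ls[i]? = some l' → ts[i]? = some t → HUnfolds h l' t) →
      HUnfolds h l (.con c ts)

/-- `merge(h, c(ℓ⃗)) = (h', ℓ)`: extension of the heap `h` by `c(ℓ⃗)` retaining maximal
sharing; an existing location is reused if possible, otherwise the first fresh location
is used. -/
inductive Merge {Con : Type} (h : Heap Con) (c : Con) (ls : List Loc) : Heap Con → Loc → Prop
  | reuse {l : Loc} : h l = some (c, ls) → Merge h c ls h l
  | fresh {l : Loc} : (∀ l', h l' ≠ some (c, ls)) → h l = none →
      (∀ l' < l, h l' ≠ none) →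
      Merge h c ls (Function.update h l (some (c, ls))) l

/-! ### Expressions, evaluation contexts and configurations -/

/-- Expressions: terms extended with locations and markers `f⟨ℓ⃗⟩{e}`. -/
inductive Expr (Op Con : Type) : Type
  | loc : Loc → Expr Op Con
  | op : Op → List (Expr Op Con) → Expr Op Con
  | con : Con → List (Expr Op Con) → Expr Op Con
  | marked : Op → List Loc → Expr Op Con → Expr Op Con

/-- Value expressions: built from constructors and locations only. -/
inductive IsValExpr {Op Con : Type} : Expr Op Con → Prop
  | loc (l : Loc) : IsValExpr (.loc l)
  | con {c : Con} {es} : (∀ e ∈ es, IsValExpr e) → IsValExpr (.con c es)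

/-- Evaluation contexts: a unique hole, with only locations to the left of the hole. -/
inductive Ctx (Op Con : Type) : Type
  | hole : Ctx Op Con
  | marked : Op → List Loc → Ctx Op Con → Ctx Op Con
  | op : Op → List Loc → Ctx Op Con → List (Expr Op Con) → Ctx Op Con
  | con : Con → List Loc → Ctx Op Con → List (Expr Op Con) → Ctx Op Con

/-- Plugging an expression into the hole of an evaluation context. -/
def Ctx.plug {Op Con : Type} : Ctx Op Con → Expr Op Con → Expr Op Con
  | .hole, e => e
  | .marked f ls E, e => .marked f ls (E.plug e)
  | .op f ls E es, e => .op f (ls.map Expr.loc ++ E.plug e :: es)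
  | .con c ls E es, e => .con c (ls.map Expr.loc ++ E.plug e :: es)

/-- A cache over locations. -/
abbrev HCache (Op : Type) := Set (Op × List Loc × Loc)

/-- Configurations: a cache, a heap and an expression. -/
abbrev Config (Op Con : Type) := HCache Op × Heap Con × Expr Op Con

/-- Instantiation of a term by a substitution mapping variables to locations,
yielding an expression. -/
def instE {Op Con V : Type} (σ : V → Loc) : Tm Op Con V → Expr Op Con
  | .var x => .loc (σ x)
  | .op f ts => .op f (ts.attach.map fun t => instE σ t.1)
  | .con c ts => .con c (ts.attach.map fun t => instE σ t.1)
decreasing_by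
  all_goals simp_wf
  all_goals (have := List.sizeOf_lt_of_mem t.2; omega)

/-- `PMatch h σ p l`: the pattern `p` matches the value stored at location `l` of the
heap `h`, binding the variables of `p` to locations according to `σ`.  This captures
matching via a homomorphism from the canonical tree of `p` into the heap, `σ` being the
induced substitution. -/
inductive PMatch {Op Con V : Type} (h : Heap Con) (σ : V → Loc) : Tm Op Con V → Loc → Prop
  | var {x l} : σ x = l → PMatch h σ (.var x) l
  | con {c : Con} {ps l ls} : h l = some (c, ls) → ps.length = ls.length →
      (∀ (i : ℕ) p l', ps[i]? = some p → ls[i]? = some l' → PMatch h σ p l') →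
      PMatch h σ (.con c ps) l

/-! ### Small-step semantics with memoization and sharing (Figure 6) -/

/-- The (apply) step. -/
inductive ApplyStep {Op Con V : Type} (P : Prog Op Con V) : Config Op Con → Config Op Con → Prop
  | mk {C : HCache Op} {h : Heap Con} {E : Ctx Op Con} {f ls r σ} :
      (∀ l, (f, ls, l) ∉ C) →
      r ∈ P.rules → r.lhsOp = f →
      r.lhsArgs.length = ls.length →
      (∀ (i : ℕ) p l, r.lhsArgs[i]? = some p → ls[i]? = some l → PMatch h σ p l) →
      ApplyStep P (C, h, E.plug (.op f (ls.map Expr.loc)))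
        (C, h, E.plug (.marked f ls (instE σ r.rhs)))

/-- The (read) step. -/
inductive ReadStep {Op Con : Type} : Config Op Con → Config Op Con → Prop
  | mk {C : HCache Op} {h : Heap Con} {E : Ctx Op Con} {f ls l} :
      (f, ls, l) ∈ C →
      ReadStep (C, h, E.plug (.op f (ls.map Expr.loc))) (C, h, E.plug (.loc l))

/-- The (store) step. -/
inductive StoreStep {Op Con : Type} : Config Op Con → Config Op Con → Prop
  | mk {C : HCache Op} {h : Heap Con} {E : Ctx Op Con} {f ls l} :
      StoreStep (C, h, E.plug (.marked f ls (.loc l)))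
        (insert (f, ls, l) C, h, E.plug (.loc l))

/-- The (merge) step. -/
inductive MergeStep {Op Con : Type} : Config Op Con → Config Op Con → Prop
  | mk {C : HCache Op} {h h' : Heap Con} {E : Ctx Op Con} {c ls l} :
      Merge h c ls h' l →
      MergeStep (C, h, E.plug (.con c (ls.map Expr.loc))) (C, h', E.plug (.loc l))

/-- `→sm`: read, store or merge. -/
def SmStep {Op Con : Type} : Config Op Con → Config Op Con → Prop :=
  fun a b => ReadStep a b ∨ StoreStep a b ∨ MergeStep a b

/-- `⇒`: apply, read, store or merge. -/
def Step {Op Con V : Type} (P : Prog Op Con V) : Config Op Con → Config Op Con → Prop :=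
  fun a b => ApplyStep P a b ∨ SmStep a b

/-- n-fold composition of `⇒`. -/
def StepN {Op Con V : Type} (P : Prog Op Con V) : ℕ → Config Op Con → Config Op Con → Prop
  | 0 => fun a b => a = b
  | n + 1 => fun a c => ∃ b, Step P a b ∧ StepN P n b c

/-- `→sm*`. -/
def SmSteps {Op Con : Type} : Config Op Con → Config Op Con → Prop :=
  Relation.ReflTransGen SmStep

/-- `⇛ = →sm* · ⇀ · →sm*`. -/
def MacroStep {Op Con V : Type} (P : Prog Op Con V) : Config Op Con → Config Op Con → Prop :=
  fun a d => ∃ b c, SmSteps a b ∧ ApplyStep P b c ∧ SmSteps c d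

/-- `⇛^m`, the m-fold composition of `⇛`: a reduction containing exactly `m` apply steps. -/
def MacroStepN {Op Con V : Type} (P : Prog Op Con V) : ℕ → Config Op Con → Config Op Con → Prop
  | 0 => fun a b => a = b
  | n + 1 => fun a c => ∃ b, MacroStep P a b ∧ MacroStepN P n b c

/-! ### Well-formed configurations -/

/-- A marker `f⟨ℓ⃗⟩{·}` occurs somewhere in the given expression. -/
inductive MarkedIn {Op Con : Type} (f : Op) (ls : List Loc) : Expr Op Con → Prop
  | here {e} : MarkedIn f ls (.marked f ls e)
  | op {g es e} : e ∈ es → MarkedIn f ls e → MarkedIn f ls (.op g es)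
  | con {c es e} : e ∈ es → MarkedIn f ls e → MarkedIn f ls (.con c es)
  | marked {g ls' e} : MarkedIn f ls e → MarkedIn f ls (.marked g ls' e)

/-- The location `l` occurs in the given expression. -/
inductive LocInExpr {Op Con : Type} (l : Loc) : Expr Op Con → Prop
  | loc : LocInExpr l (.loc l)
  | op {f es e} : e ∈ es → LocInExpr l e → LocInExpr l (.op f es)
  | con {c es e} : e ∈ es → LocInExpr l e → LocInExpr l (.con c es)
  | markedArg {f ls e} : l ∈ ls → LocInExpr l (.marked f ls e)
  | markedBody {f ls e} : LocInExpr l e → LocInExpr l (.marked f ls e)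

/-- Well-formed configurations: the heap is a maximally shared term graph, the cache is a
function compatible with the expression, and there are no dangling locations. -/
def WF {Op Con : Type} (cfg : Config Op Con) : Prop :=
  MaxShared cfg.2.1 ∧ HeapClosed cfg.2.1 ∧
  (∀ f ls l1 l2, (f, ls, l1) ∈ cfg.1 → (f, ls, l2) ∈ cfg.1 → l1 = l2) ∧
  (∀ f ls, MarkedIn f ls cfg.2.2 → ∀ l, (f, ls, l) ∉ cfg.1) ∧
  (∀ f ls l, (f, ls, l) ∈ cfg.1 → l ∈ heapDom cfg.2.1 ∧ ∀ l' ∈ ls, l' ∈ heapDom cfg.2.1) ∧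
  (∀ l, LocInExpr l cfg.2.2 → l ∈ heapDom cfg.2.1)

/-! ### Unfolding of expressions and caches -/

/-- `EUnfolds h e t`: the term `t = [e]_h` is obtained from `e` by following pointers to
the heap and erasing markers. -/
inductive EUnfolds {Op Con V : Type} (h : Heap Con) : Expr Op Con → Tm Op Con V → Prop
  | loc {l t} : HUnfolds h l t → EUnfolds h (.loc l) t
  | op {f : Op} {es ts} : es.length = ts.length →
      (∀ (i : ℕ) e t, es[i]? = some e → ts[i]? = some t → EUnfolds h e t) →
      EUnfolds h (.op f es) (.op f ts)
  | con {c : Con} {es ts} : es.length = ts.length →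
      (∀ (i : ℕ) e t, es[i]? = some e → ts[i]? = some t → EUnfolds h e t) →
      EUnfolds h (.con c es) (.con c ts)
  | marked {f ls e t} : EUnfolds h e t → EUnfolds h (.marked f ls e) t

/-- `[C]_h`: the unfolding of a location cache into a term cache. -/
def cacheUnfold {Op Con : Type} (V : Type) (h : Heap Con) (C : HCache Op) :
    TCache Op Con V :=
  {x | ∃ ls l, (x.1, ls, l) ∈ C ∧ ls.length = x.2.1.length ∧
    (∀ (i : ℕ) l' t, ls[i]? = some l' → x.2.1[i]? = some t → HUnfolds h l' t) ∧
    HUnfolds h l x.2.2}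

/-- An initial configuration: empty cache, maximally shared heap without dangling
locations, and an expression `f(v₁,…,vₖ)` whose arguments are value expressions. -/
def InitialConf {Op Con : Type} (h : Heap Con) (e : Expr Op Con) : Prop :=
  MaxShared h ∧ HeapClosed h ∧ (∀ l, LocInExpr l e → l ∈ heapDom h) ∧
  ∃ (f : Op) (es : List (Expr Op Con)), e = .op f es ∧ ∀ e' ∈ es, IsValExpr e'

/-! ### Sizes and weights -/

/-- The size `|e|` of an expression: every symbol and location counts one. -/
def exprSize {Op Con : Type} : Expr Op Con → ℕ
  | .loc _ => 1
  | .op _ es => 1 + (es.attach.map fun e => exprSize e.1).sum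
  | .con _ es => 1 + (es.attach.map fun e => exprSize e.1).sum
  | .marked _ _ e => 1 + exprSize e
decreasing_by
  all_goals simp_wf
  all_goals (have := List.sizeOf_lt_of_mem e.2; omega)

/-- The weight `‖e‖` of an expression: like the size, but locations count zero. -/
def weight {Op Con : Type} : Expr Op Con → ℕ
  | .loc _ => 0
  | .op _ es => 1 + (es.attach.map fun e => weight e.1).sum
  | .con _ es => 1 + (es.attach.map fun e => weight e.1).sum
  | .marked _ _ e => 1 + weight e
decreasing_by
  all_goals simp_wf
  all_goals (have := List.sizeOf_lt_of_mem e.2; omega)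

/-- `Δ`, the maximal size of a right-hand side of the program. -/
def progDelta {Op Con V : Type} (P : Prog Op Con V) : ℕ :=
  (P.rules.map fun r => r.rhs.size).foldr max 1

/-- The size of a configuration: cardinality of the cache plus number of heap nodes plus
size of the expression. -/
noncomputable def confSize {Op Con : Type} (cfg : Config Op Con) : ℕ :=
  cfg.1.ncard + (heapDom cfg.2.1).ncard + exprSize cfg.2.2

open Classical in
/-- The number of apply steps along a list of configurations. -/
noncomputable def applyCount {Op Con V : Type} (P : Prog Op Con V) :
    List (Config Op Con) → ℕ
  | [] => 0
  | [_] => 0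
  | a :: b :: rest => (if ApplyStep P a b then 1 else 0) + applyCount P (b :: rest)

end Memo

/-!
Once an expression decomposes in at most one way as `E[e]` with `e` a redex (only locations
stand left of the hole), (store) is deterministic outright, (read) because the cache is a
function, and (merge) because a maximally shared heap has at most one node labelled `c(ℓ⃗)`,
and otherwise the least free location is taken.

For (apply), let two rules of the same operation match the same argument locations. Each
left-hand side is linear, so a single substitution turns it into the unfolding of the heap at
those locations, truncated at any depth beyond the height of the patterns; this common instance
forces the rules to coincide by non-ambiguity. Matching determines the substitution on the
variables of the left-hand side, and these include the variables of the right-hand side.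
-/

namespace List

theorem forall₂_of_getElem? {α β : Type*} {R : α → β → Prop} :
    ∀ {as : List α} {bs : List β}, as.length = bs.length →
      (∀ (i : ℕ) a b, as[i]? = some a → bs[i]? = some b → R a b) → Forall₂ R as bs
  | [], [], _, _ => .nil
  | a :: _, b :: _, hlen, h =>
    .cons (h 0 a b rfl rfl) (forall₂_of_getElem? (Nat.succ.inj hlen)
      fun i a' b' ha hb => h (i + 1) a' b' ha hb)

theorem eventually_forall₂ {ι α β : Type*} {l : Filter ι} {R : ι → α → β → Prop} :
    ∀ {as : List α} {bs : List β}, Forall₂ (fun a b => ∀ᶠ n in l, R n a b) as bs →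
      ∀ᶠ n in l, Forall₂ (R n) as bs
  | _, _, .nil => .of_forall fun _ => .nil
  | _, _, .cons h hs => (h.and (eventually_forall₂ hs)).mono fun _ ⟨h, hs⟩ => .cons h hs

theorem append_cons_inj_of_forall {α : Type*} (p : α → Prop) :
    ∀ {l₁ l₂ : List α} {x y : α} {r₁ r₂ : List α},
      (∀ a ∈ l₁, p a) → (∀ a ∈ l₂, p a) → ¬ p x → ¬ p y →
      l₁ ++ x :: r₁ = l₂ ++ y :: r₂ → l₁ = l₂ ∧ x = y ∧ r₁ = r₂
  | [], [], _, _, _, _, _, _, _, _, h => by simpa using h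
  | [], b :: _, _, _, _, _, _, h₂, hx, _, h => by
    simp only [nil_append, cons_append, cons.injEq] at h
    exact absurd (h.1 ▸ h₂ b mem_cons_self) hx
  | a :: _, [], _, _, _, _, h₁, _, _, hy, h => by
    simp only [nil_append, cons_append, cons.injEq] at h
    exact absurd (h.1 ▸ h₁ a mem_cons_self) hy
  | a :: l₁, b :: l₂, _, _, _, _, h₁, h₂, hx, hy, h => by
    simp only [cons_append, cons.injEq] at h
    obtain ⟨e, ex, er⟩ := append_cons_inj_of_forall p
      (fun z hz => h₁ z (mem_cons_of_mem _ hz)) (fun z hz => h₂ z (mem_cons_of_mem _ hz))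
      hx hy h.2
    exact ⟨by rw [h.1, e], ex, er⟩

end List

namespace Memo

section Determinism

variable {Op Con V : Type}

theorem Tm.ind {motive : Tm Op Con V → Prop}
    (var : ∀ x, motive (.var x))
    (op : ∀ f ts, (∀ t ∈ ts, motive t) → motive (.op f ts))
    (con : ∀ c ts, (∀ t ∈ ts, motive t) → motive (.con c ts)) : ∀ t, motive t
  | .var x => var x
  | .op f ts => op f ts fun t _ => Tm.ind var op con t
  | .con c ts => con c ts fun t _ => Tm.ind var op con t
decreasing_by
  all_goals simp_wf
  all_goals (have := List.sizeOf_lt_of_mem ‹t ∈ ts›; omega)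

theorem Tm.subst_congr {σ₁ σ₂ : V → Tm Op Con V} (t : Tm Op Con V)
    (h : ∀ x, VarIn x t → σ₁ x = σ₂ x) : t.subst σ₁ = t.subst σ₂ := by
  induction t using Tm.ind with
  | var x => simpa [Tm.subst] using h x .var
  | op f ts ih =>
    simpa [Tm.subst] using fun t ht => ih t ht fun x hx => h x (.op ht hx)
  | con c ts ih =>
    simpa [Tm.subst] using fun t ht => ih t ht fun x hx => h x (.con ht hx)

theorem instE_congr {σ₁ σ₂ : V → Loc} (t : Tm Op Con V)
    (h : ∀ x, VarIn x t → σ₁ x = σ₂ x) :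
    instE (Op := Op) (Con := Con) σ₁ t = instE σ₂ t := by
  induction t using Tm.ind with
  | var x => simpa [instE] using h x .var
  | op f ts ih =>
    simpa [instE] using fun t ht => ih t ht fun x hx => h x (.op ht hx)
  | con c ts ih =>
    simpa [instE] using fun t ht => ih t ht fun x hx => h x (.con ht hx)

theorem Tm.one_le_varCount [DecidableEq V] {x : V} {t : Tm Op Con V} (h : VarIn x t) :
    1 ≤ t.varCount x := by
  induction h with
  | var => simp [Tm.varCount]
  | @op _ ts t ht _ ih | @con _ ts t ht _ ih =>
    simp only [Tm.varCount, List.attach_map_val]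
    exact ih.trans (List.le_sum_of_mem (List.mem_map_of_mem ht))

section Linear
variable [DecidableEq V]

def IsLinear (ts : List (Tm Op Con V)) : Prop :=
  ∀ x, (ts.map (Tm.varCount x)).sum ≤ 1

theorem IsLinear.of_cons {t : Tm Op Con V} {ts : List (Tm Op Con V)}
    (h : IsLinear (t :: ts)) : IsLinear ts :=
  fun x => le_trans (by simp) (h x)

theorem IsLinear.varCount_le_one {t : Tm Op Con V} {ts : List (Tm Op Con V)}
    (h : IsLinear ts) (ht : t ∈ ts) (x : V) : t.varCount x ≤ 1 :=
  (List.le_sum_of_mem (List.mem_map_of_mem ht)).trans (h x)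

theorem IsLinear.not_varIn_of_cons {t t' : Tm Op Con V} {ts : List (Tm Op Con V)}
    (h : IsLinear (t :: ts)) {x : V} (hx : VarIn x t) (ht' : t' ∈ ts) : ¬ VarIn x t' := by
  intro hx'
  have hsum := h x
  rw [List.map_cons, List.sum_cons] at hsum
  have := List.le_sum_of_mem (List.mem_map_of_mem (f := Tm.varCount x) ht')
  have := Tm.one_le_varCount hx
  have := Tm.one_le_varCount hx'
  omega

theorem IsLinear.exists_map_subst_eq {ts us : List (Tm Op Con V)} (hlin : IsLinear ts)
    (h : List.Forall₂ (fun t u => ∃ τ, t.subst τ = u) ts us) :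
    ∃ τ, ts.map (Tm.subst τ) = us := by
  induction h with
  | nil => exact ⟨Tm.var, rfl⟩
  | @cons t u ts us htu _ ih =>
    classical
    obtain ⟨τ₀, hτ₀⟩ := htu
    obtain ⟨τ, hτ⟩ := ih hlin.of_cons
    refine ⟨fun x => if VarIn x t then τ₀ x else τ x, ?_⟩
    rw [List.map_cons, ← hτ₀, ← hτ]
    congr 1
    · exact Tm.subst_congr t fun x hx => if_pos hx
    · exact List.map_congr_left fun t' ht' =>
        Tm.subst_congr t' fun x hx => if_neg fun hxt => hlin.not_varIn_of_cons hxt ht' hx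

end Linear

/-- The term `d` fills in below depth `n` and at dangling locations. -/
def truncUnfold (h : Heap Con) (d : Tm Op Con V) : ℕ → Loc → Tm Op Con V
  | 0, _ => d
  | n + 1, l =>
    match h l with
    | some (c, ls) => .con c (ls.map (truncUnfold h d n))
    | none => d

theorem IsLinear.eventually_exists_map_subst_eq [DecidableEq V] {ps : List (Tm Op Con V)}
    {ls : List Loc} {u : ℕ → Loc → Tm Op Con V} (hlin : IsLinear ps)
    (h : List.Forall₂ (fun p l => ∀ᶠ n in Filter.atTop, ∃ τ, p.subst τ = u n l) ps ls) :
    ∀ᶠ n in Filter.atTop, ∃ τ, ps.map (Tm.subst τ) = ls.map (u n) :=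
  (List.eventually_forall₂ h).mono fun _ hn =>
    hlin.exists_map_subst_eq (List.forall₂_map_right_iff.2 hn)

namespace PMatch
variable {h : Heap Con}

theorem eventually_exists_subst_eq [DecidableEq V] {σ : V → Loc} {p : Tm Op Con V} {l : Loc}
    (hm : PMatch h σ p l) (d : Tm Op Con V) (hlin : ∀ x, p.varCount x ≤ 1) :
    ∀ᶠ n in Filter.atTop, ∃ τ, p.subst τ = truncUnfold h d n l := by
  induction hm with
  | @var x l _ => exact .of_forall fun n => ⟨fun _ => truncUnfold h d n l, by simp [Tm.subst]⟩
  | @con c ps l ls hl hlen _ ih =>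
    have hlinps : IsLinear ps := fun x => by simpa [Tm.varCount] using hlin x
    have hchildren := hlinps.eventually_exists_map_subst_eq (u := truncUnfold h d)
      (List.forall₂_of_getElem? hlen fun i p l' hp hl' =>
        ih i p l' hp hl' (hlinps.varCount_le_one (List.mem_of_getElem? hp)))
    obtain ⟨N, hN⟩ := Filter.eventually_atTop.1 hchildren
    refine Filter.eventually_atTop.2 ⟨N + 1, fun n hn => ?_⟩
    obtain ⟨m, rfl⟩ : ∃ m, n = m + 1 := ⟨n - 1, by omega⟩
    obtain ⟨τ, hτ⟩ := hN m (by omega)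
    exact ⟨τ, by simp [Tm.subst, truncUnfold, hl, ← hτ]⟩

theorem eq_of_varIn {σ₁ σ₂ : V → Loc} {x : V} {p : Tm Op Con V} (hx : VarIn x p) :
    ∀ {l : Loc}, PMatch h σ₁ p l → PMatch h σ₂ p l → σ₁ x = σ₂ x := by
  induction hx with
  | var =>
    rintro l ⟨rfl⟩ ⟨h₂⟩
    exact h₂.symm
  | op => rintro l ⟨⟩
  | @con c ts t ht _ ih =>
    intro l hm₁ hm₂
    cases hm₁ with | @con _ _ _ ls₁ hl₁ hlen₁ hch₁ =>
    cases hm₂ with | @con _ _ _ ls₂ hl₂ _ hch₂ =>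
    obtain rfl : ls₁ = ls₂ := congrArg Prod.snd (Option.some.inj (hl₁.symm.trans hl₂))
    obtain ⟨i, hi, rfl⟩ := List.getElem_of_mem ht
    have hli := List.getElem?_eq_getElem (hlen₁ ▸ hi)
    exact ih (hch₁ i _ _ (List.getElem?_eq_getElem hi) hli)
      (hch₂ i _ _ (List.getElem?_eq_getElem hi) hli)

theorem eq_of_forall₂_of_varIn {σ₁ σ₂ : V → Loc} {x : V} {p : Tm Op Con V}
    {ps : List (Tm Op Con V)} {ls : List Loc} (hm₁ : List.Forall₂ (PMatch h σ₁) ps ls)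
    (hm₂ : List.Forall₂ (PMatch h σ₂) ps ls) (hp : p ∈ ps) (hx : VarIn x p) : σ₁ x = σ₂ x := by
  induction hm₁ with
  | nil => cases hp
  | cons hm₁ _ ih =>
    cases hm₂ with
    | cons hm₂ hm₂s =>
      rcases List.mem_cons.1 hp with rfl | hp
      exacts [eq_of_varIn hx hm₁ hm₂, ih hm₂s hp]

theorem eventually_exists_map_subst_eq [DecidableEq V] {σ : V → Loc}
    {ps : List (Tm Op Con V)} {ls : List Loc} (hlin : IsLinear ps)
    (hm : List.Forall₂ (PMatch h σ) ps ls) (d : Tm Op Con V) :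
    ∀ᶠ n in Filter.atTop, ∃ τ, ps.map (Tm.subst τ) = ls.map (truncUnfold h d n) :=
  hlin.eventually_exists_map_subst_eq <|
    ((List.forall₂_and_left _ _).2 ⟨fun _ hp => hlin.varCount_le_one hp, hm⟩).imp
      fun _ _ ⟨hp, hpm⟩ => hpm.eventually_exists_subst_eq d hp

end PMatch

/-- Left-hand sides matching the same locations have a common instance: a deep enough
unfolding of the heap. -/
theorem NonAmbiguous.eq_of_forall₂_pMatch [DecidableEq V] {P : Prog Op Con V}
    (hP : NonAmbiguous P) {r₁ r₂ : Rule Op Con V} (hr₁ : r₁ ∈ P.rules) (hr₂ : r₂ ∈ P.rules)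
    (hop : r₁.lhsOp = r₂.lhsOp) (hlin₁ : IsLinear r₁.lhsArgs) (hlin₂ : IsLinear r₂.lhsArgs)
    {h : Heap Con} {σ₁ σ₂ : V → Loc} {ls : List Loc}
    (hm₁ : List.Forall₂ (PMatch h σ₁) r₁.lhsArgs ls)
    (hm₂ : List.Forall₂ (PMatch h σ₂) r₂.lhsArgs ls) : r₁ = r₂ := by
  -- any filler term will do; `V` may be empty
  let d : Tm Op Con V := .op r₁.lhsOp []
  obtain ⟨n, ⟨τ₁, hτ₁⟩, ⟨τ₂, hτ₂⟩⟩ := ((PMatch.eventually_exists_map_subst_eq hlin₁ hm₁ d).and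
    (PMatch.eventually_exists_map_subst_eq hlin₂ hm₂ d)).exists
  exact hP r₁ hr₁ r₂ hr₂ hop τ₁ τ₂ (hτ₁.trans hτ₂.symm)

theorem WFRule.instE_rhs_eq {r : Rule Op Con V} (hr : WFRule r) {h : Heap Con}
    {σ₁ σ₂ : V → Loc} {ls : List Loc} (hm₁ : List.Forall₂ (PMatch h σ₁) r.lhsArgs ls)
    (hm₂ : List.Forall₂ (PMatch h σ₂) r.lhsArgs ls) :
    instE (Op := Op) (Con := Con) σ₁ r.rhs = instE σ₂ r.rhs :=
  instE_congr _ fun x hx =>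
    let ⟨_, hp, hxp⟩ := hr.2 x hx
    PMatch.eq_of_forall₂_of_varIn hm₁ hm₂ hp hxp

def Expr.IsLoc (e : Expr Op Con) : Prop := ∃ l, e = .loc l

/-- The shapes rewritten by the four step relations. -/
inductive IsRedex : Expr Op Con → Prop
  | op {f : Op} {es : List (Expr Op Con)} : (∀ e ∈ es, e.IsLoc) → IsRedex (.op f es)
  | con {c : Con} {es : List (Expr Op Con)} : (∀ e ∈ es, e.IsLoc) → IsRedex (.con c es)
  | marked {f : Op} {ls : List Loc} {e : Expr Op Con} : e.IsLoc → IsRedex (.marked f ls e)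

theorem isRedex_op (f : Op) (ls : List Loc) :
    IsRedex (.op (Con := Con) f (ls.map .loc)) :=
  .op (by simp [Expr.IsLoc])

theorem isRedex_con (c : Con) (ls : List Loc) :
    IsRedex (.con (Op := Op) c (ls.map .loc)) :=
  .con (by simp [Expr.IsLoc])

theorem isRedex_marked (f : Op) (ls : List Loc) (l : Loc) :
    IsRedex (.marked (Con := Con) f ls (.loc l)) :=
  .marked ⟨l, rfl⟩

theorem map_loc_injective : Function.Injective (List.map (Expr.loc (Op := Op) (Con := Con))) :=
  List.map_injective_iff.2 fun _ _ => Expr.loc.inj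

namespace Ctx

theorem plug_not_isLoc (E : Ctx Op Con) {e : Expr Op Con} (he : IsRedex e) :
    ¬ (E.plug e).IsLoc := by
  rintro ⟨l, hl⟩
  cases E <;> cases he <;> simp [plug] at hl

theorem eq_hole_of_plug_eq {E : Ctx Op Con} {e e' : Expr Op Con} (he : IsRedex e)
    (he' : IsRedex e') (h : E.plug e = e') : E = .hole := by
  subst h
  cases E with
  | hole => rfl
  | marked f ls E => cases he' with | marked h => exact absurd h (E.plug_not_isLoc he)
  | op f ls E es => cases he' with | op h => exact absurd (h _ (by simp)) (E.plug_not_isLoc he)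
  | con c ls E es => cases he' with | con h => exact absurd (h _ (by simp)) (E.plug_not_isLoc he)

theorem plug_inj {E E' : Ctx Op Con} {e e' : Expr Op Con} (he : IsRedex e) (he' : IsRedex e')
    (h : E.plug e = E'.plug e') : E = E' ∧ e = e' := by
  induction E generalizing E' with
  | hole =>
    obtain rfl := eq_hole_of_plug_eq he' he h.symm
    exact ⟨rfl, h⟩
  | marked f ls E ih =>
    cases E' with
    | hole => cases eq_hole_of_plug_eq he he' h
    | marked g ls' E' =>
      simp only [plug, Expr.marked.injEq] at h
      obtain ⟨rfl, rfl, h⟩ := h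
      obtain ⟨rfl, rfl⟩ := ih h
      exact ⟨rfl, rfl⟩
    | op | con => simp [plug] at h
  | op f ls E es ih =>
    cases E' with
    | hole => cases eq_hole_of_plug_eq he he' h
    | op g ls' E' es' =>
      simp only [plug, Expr.op.injEq] at h
      obtain ⟨rfl, hargs⟩ := h
      obtain ⟨hls, h, rfl⟩ := List.append_cons_inj_of_forall Expr.IsLoc (by simp [Expr.IsLoc])
        (by simp [Expr.IsLoc]) (E.plug_not_isLoc he) (E'.plug_not_isLoc he') hargs
      obtain ⟨rfl, rfl⟩ := ih h
      obtain rfl := map_loc_injective hls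
      exact ⟨rfl, rfl⟩
    | marked | con => simp [plug] at h
  | con c ls E es ih =>
    cases E' with
    | hole => cases eq_hole_of_plug_eq he he' h
    | con g ls' E' es' =>
      simp only [plug, Expr.con.injEq] at h
      obtain ⟨rfl, hargs⟩ := h
      obtain ⟨hls, h, rfl⟩ := List.append_cons_inj_of_forall Expr.IsLoc (by simp [Expr.IsLoc])
        (by simp [Expr.IsLoc]) (E.plug_not_isLoc he) (E'.plug_not_isLoc he') hargs
      obtain ⟨rfl, rfl⟩ := ih h
      obtain rfl := map_loc_injective hls
      exact ⟨rfl, rfl⟩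
    | marked | op => simp [plug] at h

end Ctx

theorem config_eq_plug_inj {C C' : HCache Op} {h h' : Heap Con} {E E' : Ctx Op Con}
    {e e' : Expr Op Con} (he : IsRedex e) (he' : IsRedex e')
    (heq : (C, h, E.plug e) = (C', h', E'.plug e')) : C = C' ∧ h = h' ∧ E = E' ∧ e = e' := by
  simp only [Prod.mk.injEq] at heq
  exact ⟨heq.1, heq.2.1, Ctx.plug_inj he he' heq.2.2⟩

theorem Merge.unique {h : Heap Con} (hms : MaxShared h) {c : Con} {ls : List Loc}
    {h₁ h₂ : Heap Con} {l₁ l₂ : Loc} (m₁ : Merge h c ls h₁ l₁) (m₂ : Merge h c ls h₂ l₂) :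
    h₁ = h₂ ∧ l₁ = l₂ := by
  cases m₁ with
  | reuse e₁ =>
    cases m₂ with
    | reuse e₂ => exact ⟨rfl, hms _ _ _ _ e₁ e₂⟩
    | fresh hne _ _ => exact absurd e₁ (hne _)
  | fresh hne₁ hfree₁ hmin₁ =>
    cases m₂ with
    | reuse e₂ => exact absurd e₂ (hne₁ _)
    | fresh _ hfree₂ hmin₂ =>
      obtain rfl : l₁ = l₂ := le_antisymm
        (not_lt.1 fun hlt => hmin₁ _ hlt hfree₂) (not_lt.1 fun hlt => hmin₂ _ hlt hfree₁)
      exact ⟨rfl, rfl⟩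

theorem ApplyStep.unique [DecidableEq V] {P : Prog Op Con V} (hP : Orthogonal P)
    {c c₁ c₂ : Config Op Con} (s₁ : ApplyStep P c c₁) (s₂ : ApplyStep P c c₂) : c₁ = c₂ := by
  obtain @⟨C, h, E, f, ls, r₁, σ₁, _, hr₁, hop₁, hlen₁, hm₁⟩ := s₁
  generalize hc : (C, h, E.plug (.op f (ls.map .loc))) = c at s₂
  obtain @⟨C', h', E', f', ls', r₂, σ₂, _, hr₂, hop₂, hlen₂, hm₂⟩ := s₂
  obtain ⟨rfl, rfl, rfl, hredex⟩ := config_eq_plug_inj (isRedex_op f ls) (isRedex_op f' ls') hc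
  simp only [Expr.op.injEq, map_loc_injective.eq_iff] at hredex
  obtain ⟨rfl, rfl⟩ := hredex
  have hm₁ := List.forall₂_of_getElem? hlen₁ hm₁
  have hm₂ := List.forall₂_of_getElem? hlen₂ hm₂
  obtain rfl := hP.2.eq_of_forall₂_pMatch hr₁ hr₂ (hop₁.trans hop₂.symm) (hP.1 r₁ hr₁).2
    (hP.1 r₂ hr₂).2 hm₁ hm₂
  rw [(hP.1 r₁ hr₁).1.instE_rhs_eq hm₁ hm₂]

theorem ReadStep.unique {c c₁ c₂ : Config Op Con}
    (hfun : ∀ f ls l₁ l₂, (f, ls, l₁) ∈ c.1 → (f, ls, l₂) ∈ c.1 → l₁ = l₂)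
    (s₁ : ReadStep c c₁) (s₂ : ReadStep c c₂) : c₁ = c₂ := by
  obtain @⟨C, h, E, f, ls, l₁, hl₁⟩ := s₁
  generalize hc : (C, h, E.plug (.op f (ls.map .loc))) = c at s₂ hfun
  obtain @⟨C', h', E', f', ls', l₂, hl₂⟩ := s₂
  obtain ⟨rfl, rfl, rfl, hredex⟩ := config_eq_plug_inj (isRedex_op f ls) (isRedex_op f' ls') hc
  simp only [Expr.op.injEq, map_loc_injective.eq_iff] at hredex
  obtain ⟨rfl, rfl⟩ := hredex
  rw [hfun f ls l₁ l₂ hl₁ hl₂]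

theorem StoreStep.unique {c c₁ c₂ : Config Op Con} (s₁ : StoreStep c c₁)
    (s₂ : StoreStep c c₂) : c₁ = c₂ := by
  obtain @⟨C, h, E, f, ls, l⟩ := s₁
  generalize hc : (C, h, E.plug (.marked f ls (.loc l))) = c at s₂
  obtain @⟨C', h', E', f', ls', l'⟩ := s₂
  obtain ⟨rfl, rfl, rfl, hredex⟩ :=
    config_eq_plug_inj (isRedex_marked f ls l) (isRedex_marked f' ls' l') hc
  simp only [Expr.marked.injEq, Expr.loc.injEq] at hredex
  obtain ⟨rfl, rfl, rfl⟩ := hredex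
  rfl

theorem MergeStep.unique {c c₁ c₂ : Config Op Con} (hms : MaxShared c.2.1)
    (s₁ : MergeStep c c₁) (s₂ : MergeStep c c₂) : c₁ = c₂ := by
  obtain @⟨C, h, h₁, E, k, ls, l₁, hm₁⟩ := s₁
  generalize hc : (C, h, E.plug (.con k (ls.map .loc))) = c at s₂ hms
  obtain @⟨C', h', h₂, E', k', ls', l₂, hm₂⟩ := s₂
  obtain ⟨rfl, rfl, rfl, hredex⟩ := config_eq_plug_inj (isRedex_con k ls) (isRedex_con k' ls') hc
  simp only [Expr.con.injEq, map_loc_injective.eq_iff] at hredex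
  obtain ⟨rfl, rfl⟩ := hredex
  obtain ⟨rfl, rfl⟩ := hm₁.unique hms hm₂
  rfl

end Determinism

/-- Lemma 11.(1).  Each of the four relations `⇀` (apply), `→read`,
`→store` and `→merge` is deterministic on well-formed configurations. -/
theorem statement9 {Op Con V : Type} [DecidableEq V] (P : Prog Op Con V)
    (hP : Orthogonal P) (c c1 c2 : Config Op Con) (hwf : WF c) :
    (ApplyStep P c c1 → ApplyStep P c c2 → c1 = c2) ∧
    (ReadStep c c1 → ReadStep c c2 → c1 = c2) ∧
    (StoreStep c c1 → StoreStep c c2 → c1 = c2) ∧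
    (MergeStep c c1 → MergeStep c c2 → c1 = c2) :=
  ⟨ApplyStep.unique hP, ReadStep.unique hwf.2.2.1, StoreStep.unique, MergeStep.unique hwf.1⟩

end Memo
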